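/- For any fixed degree (n,d) ∈ ℕ^I×ℤ and any word v, there are only finitely many non-increasing words of degree (n,d) that are less than or equal to v in the total lexicographic order on words. -/

import Mathlib

noncomputable section
set_option linter.unusedSectionVars false
set_option maxHeartbeats 1000000
open scoped BigOperators
open DirectSum

namespace QShuffle

/-! ## Base field 𝔽 = ℚ(q, (t_e)_{e ∈ E}) -/

abbrev FF (E : Type) : Type := FractionRing (MvPolynomial (Option E) ℚ)

def qq (E : Type) : FF E := algebraMap (MvPolynomial (Option E) ℚ) (FF E) (MvPolynomial.X none)

def tt {E : Type} (e : E) : FF E := algebraMap (MvPolynomial (Option E) ℚ) (FF E) (MvPolynomial.X (some e))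

variable {I E : Type} [Fintype I] [Fintype E] [DecidableEq I] [DecidableEq E]
variable {F : Type} [Field F]

/-! ## Quiver combinatorics -/

def edges (src tgt : E → I) (i j : I) : Finset E :=
  Finset.univ.filter fun e => src e = i ∧ tgt e = j

/-- `#_{i→j}` -/
def nE (src tgt : E → I) (i j : I) : ℕ := (edges src tgt i j).card

/-- `#_{ij} = #_{i→j} + #_{j→i}` -/
def nnE (src tgt : E → I) (i j : I) : ℕ := nE src tgt i j + nE src tgt j i

/-- Kronecker delta -/
def dl (i j : I) : ℕ := if i = j then 1 else 0

/-- The double `Ē = E ⊔ E*`. -/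
abbrev DEdge (E : Type) : Type := E ⊕ E

def dsrc (src tgt : E → I) : DEdge E → I := Sum.elim src tgt
def dtgt (src tgt : E → I) : DEdge E → I := Sum.elim tgt src
/-- `t_e` for `e ∈ Ē`, with `t_{e*} = q/t_e`. -/
def dt (q : F) (t : E → F) : DEdge E → F := Sum.elim t fun e => q * (t e)⁻¹

open LaurentPolynomial in
/-- `ζ̃_{ij}(x) = (1-xq⁻¹)^{δ_{ij}} ∏_{e:i→j}(t_e⁻¹ - x) ∏_{e:j→i}(1 - t_e q⁻¹ x⁻¹)`. -/
def zetaT (src tgt : E → I) (q : F) (t : E → F) (i j : I) : LaurentPolynomial F :=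
  (if i = j then 1 - C q⁻¹ * T 1 else 1)
    * ∏ e ∈ edges src tgt i j, (C (t e)⁻¹ - T 1)
    * ∏ e ∈ edges src tgt j i, (1 - C (t e * q⁻¹) * T (-1))

/-! ## The quadratic quantum loop group Ũ⁺ -/

def gen (F : Type) [Field F] (I : Type) (i : I) (d : ℤ) : FreeAlgebra F (I × ℤ) :=
  FreeAlgebra.ι F (i, d)

/-- coefficient of `z^{-a} w^{-b}` in `e_i(z) e_j(w) ζ̃_{ji}(w/z) z^{δ_{ij}}` -/
def quadLHS (src tgt : E → I) (q : F) (t : E → F) (i j : I) (a b : ℤ) : FreeAlgebra F (I × ℤ) :=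
  Finsupp.sum (zetaT src tgt q t j i).coeff fun m c =>
    c • (gen F I i (a + (dl i j : ℤ) - m) * gen F I j (b + m))

/-- coefficient of `z^{-a} w^{-b}` in `e_j(w) e_i(z) ζ̃_{ij}(z/w) (-w)^{δ_{ij}}` -/
def quadRHS (src tgt : E → I) (q : F) (t : E → F) (i j : I) (a b : ℤ) : FreeAlgebra F (I × ℤ) :=
  ((-1 : F) ^ dl i j) •
    Finsupp.sum (zetaT src tgt q t i j).coeff fun m c =>
      c • (gen F I j (b + (dl i j : ℤ) - m) * gen F I i (a + m))

/-- The quadratic relations. -/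
inductive QuadRel (src tgt : E → I) (q : F) (t : E → F) :
    FreeAlgebra F (I × ℤ) → FreeAlgebra F (I × ℤ) → Prop
  | rel (i j : I) (a b : ℤ) :
      QuadRel src tgt q t (quadLHS src tgt q t i j a b) (quadRHS src tgt q t i j a b)

/-- The quadratic quantum loop group `Ũ⁺`. -/
abbrev Utilde (src tgt : E → I) (q : F) (t : E → F) : Type :=
  RingQuot (QuadRel src tgt q t)

/-- `e_{i,d} ∈ Ũ⁺` -/
def eU (src tgt : E → I) (q : F) (t : E → F) (i : I) (d : ℤ) : Utilde src tgt q t :=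
  RingQuot.mkAlgHom F (QuadRel src tgt q t) (gen F I i d)

/-! ## Words -/

abbrev Word (I : Type) : Type := List (I × ℤ)

/-- `e_w ∈ Ũ⁺` -/
def eW (src tgt : E → I) (q : F) (t : E → F) (w : Word I) : Utilde src tgt q t :=
  (w.map fun p => eU src tgt q t p.1 p.2).prod

/-- `e_w` in the free algebra -/
def eWFree (F : Type) [Field F] {I : Type} (w : Word I) : FreeAlgebra F (I × ℤ) :=
  (w.map fun p => gen F I p.1 p.2).prod

def colorCount (w : Word I) (i : I) : ℕ := (w.map Prod.fst).count i
def expSum (w : Word I) : ℤ := (w.map Prod.snd).sum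

/-- letter order: `i^{(d)} < j^{(e)}` iff `d > e` or (`d = e` and `i < j`) -/
def letterLT [LT I] (p r : I × ℤ) : Prop := r.2 < p.2 ∨ (p.2 = r.2 ∧ p.1 < r.1)

/-- lexicographic order on words -/
def wordLT [LT I] (w v : Word I) : Prop := List.Lex letterLT w v
def wordLE [LT I] (w v : Word I) : Prop := wordLT w v ∨ w = v

/-- A non-increasing word. -/
def NonInc (src tgt : E → I) [LinearOrder I] (w : Word I) : Prop :=
  ∀ a b : Fin w.length, a < b →
    (w.get a).2 < (w.get b).2 + ∑ s ∈ Finset.Ico a b, (nnE src tgt (w.get s).1 (w.get b).1 : ℤ)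
    ∨ ((w.get a).2 = (w.get b).2 + ∑ s ∈ Finset.Ico a b, (nnE src tgt (w.get s).1 (w.get b).1 : ℤ)
        ∧ (w.get b).1 ≤ (w.get a).1)

/-! ## The big shuffle algebra: graded pieces -/

abbrev VarType {I : Type} (ν : I → ℕ) : Type := Σ i : I, Fin (ν i)

abbrev Laur (F : Type) [Field F] {I : Type} (ν : I → ℕ) : Type :=
  AddMonoidAlgebra F (VarType ν →₀ ℤ)

def rnm {ν : I → ℕ} (g : VarType ν ≃ VarType ν) (R : Laur F ν) : Laur F ν :=
  AddMonoidAlgebra.ofCoeff (Finsupp.mapDomain (Finsupp.equivMapDomain g) R.coeff)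

def ColorPres {ν : I → ℕ} (g : VarType ν ≃ VarType ν) : Prop := ∀ x : VarType ν, (g x).1 = x.1

def IsSym {ν : I → ℕ} (R : Laur F ν) : Prop :=
  ∀ g : VarType ν ≃ VarType ν, ColorPres g → rnm g R = R

def SymSub (F : Type) [Field F] {I : Type} (ν : I → ℕ) : Submodule F (Laur F ν) where
  carrier := {R | IsSym R}
  add_mem' := by
    intro R S hR hS g hg
    have h1 := hR g hg
    have h2 := hS g hg
    unfold rnm at *
    rw [AddMonoidAlgebra.coeff_add, Finsupp.mapDomain_add, AddMonoidAlgebra.ofCoeff_add, h1, h2]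
  zero_mem' := by
    intro g hg
    simp [rnm]
  smul_mem' := by
    intro c R hR g hg
    have h1 := hR g hg
    unfold rnm at *
    rw [AddMonoidAlgebra.coeff_smul, Finsupp.mapDomain_smul, AddMonoidAlgebra.ofCoeff_smul, h1]

/-- The big shuffle algebra `𝒱` as a graded vector space. -/
abbrev VV (F : Type) [Field F] (I : Type) [Fintype I] [DecidableEq I] : Type :=
  ⨁ ν : I → ℕ, SymSub F ν

def inclV {F : Type} [Field F] {I : Type} [Fintype I] [DecidableEq I] (ν : I → ℕ) :
    SymSub F (I := I) ν →ₗ[F] VV F I :=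
  DirectSum.lof F (I → ℕ) (fun ν => SymSub F ν) ν

def sgm (i : I) : I → ℕ := fun j => if j = i then 1 else 0

def oneVarM (F : Type) [Field F] {I : Type} [DecidableEq I] (i : I) (d : ℤ) :
    Laur F (sgm i) :=
  AddMonoidAlgebra.single (Finsupp.single ⟨i, ⟨0, by simp [sgm]⟩⟩ d) 1

lemma varSubsingleton {i : I} (x y : VarType (sgm i)) : x = y := by
  obtain ⟨a, fa⟩ := x
  obtain ⟨b, fb⟩ := y
  have ha : a = i := by
    by_contra h
    have h0 : sgm i a = 0 := by simp [sgm, h]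
    have := fa.isLt
    omega
  have hb : b = i := by
    by_contra h
    have h0 : sgm i b = 0 := by simp [sgm, h]
    have := fb.isLt
    omega
  subst ha
  subst hb
  have h1 : sgm b b = 1 := by simp [sgm]
  have hfa := fa.isLt
  have hfb := fb.isLt
  congr 1
  exact Fin.ext (by omega)

lemma oneVarM_sym (i : I) (d : ℤ) : IsSym (oneVarM F i d) := by
  intro g hg
  have hgid : g = Equiv.refl _ := Equiv.ext fun x => varSubsingleton _ _
  subst hgid
  unfold rnm
  have hid : (Finsupp.equivMapDomain (Equiv.refl (VarType (sgm i))) :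
      (VarType (sgm i) →₀ ℤ) → (VarType (sgm i) →₀ ℤ)) = id :=
    funext fun l => Finsupp.equivMapDomain_refl l
  rw [hid, Finsupp.mapDomain_id]

/-- `z_{i1}^d` -/
def oneVar (F : Type) [Field F] {I : Type} [Fintype I] [DecidableEq I] (i : I) (d : ℤ) :
    SymSub F (sgm i) :=
  ⟨oneVarM F i d, oneVarM_sym i d⟩

lemma one_sym {ν : I → ℕ} : IsSym (AddMonoidAlgebra.single (0 : VarType ν →₀ ℤ) (1 : F)) := by
  intro g hg
  unfold rnm
  rw [AddMonoidAlgebra.coeff_single, Finsupp.mapDomain_single]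
  simp [AddMonoidAlgebra.ofCoeff_single]

instance {ν : I → ℕ} : DecidablePred (fun g : VarType ν ≃ VarType ν => ColorPres g) := fun g =>
  decidable_of_iff (∀ x : VarType ν, (g x).1 = x.1) Iff.rfl

/-! ## Specialization and wheel conditions -/

def specialize {ν : I → ℕ} (ρ : VarType ν → VarType ν) (sc : VarType ν → F) (R : Laur F ν) :
    Laur F ν :=
  Finsupp.sum R.coeff fun m a =>
    AddMonoidAlgebra.single (Finsupp.mapDomain ρ m) (a * ∏ v ∈ m.support, sc v ^ (m v))

/-- The 3-variable wheel conditions. -/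
def WheelCond (src tgt : E → I) (q : F) (t : E → F) {ν : I → ℕ} (R : Laur F ν) : Prop :=
  ∀ (eb : DEdge E) (va vb vc : VarType ν),
    va.1 = dsrc src tgt eb → vb.1 = dtgt src tgt eb → vc.1 = dsrc src tgt eb →
    va ≠ vc → vb ≠ va → vb ≠ vc →
    specialize
      (fun v => if v = va then vc else if v = vb then vc else v)
      (fun v => if v = va then q else if v = vb then dt q t eb else 1) R = 0

/-! ## The shuffle product, characterized by a polynomial identity -/

/-- the variable `z_v` as a Laurent polynomial -/
def XV {ν : I → ℕ} (v : VarType ν) : Laur F ν :=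
  AddMonoidAlgebra.single (Finsupp.single v 1) 1

/-- substitute the monomial with exponent vector `u` into a one-variable Laurent polynomial -/
def compL {ν : I → ℕ} (l : LaurentPolynomial F) (u : VarType ν →₀ ℤ) : Laur F ν :=
  Finsupp.sum l.coeff fun m a => AddMonoidAlgebra.single (m • u) a

/-- the exponent vector of `z_x / z_y` -/
def ratio {ν : I → ℕ} (x y : VarType ν) : VarType ν →₀ ℤ :=
  Finsupp.single x 1 - Finsupp.single y 1

/-- `∏_{(u,v) distinct, same color} (z_u - z_v)`, a symmetric Laurent polynomial used to clear
the denominators in the symmetrized shuffle product. -/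
def Dsym (F : Type) [Field F] {I : Type} [Fintype I] [DecidableEq I] (ν : I → ℕ) : Laur F ν :=
  ∏ p ∈ (Finset.univ : Finset (VarType ν × VarType ν)).filter
      (fun p => p.1 ≠ p.2 ∧ p.1.1 = p.2.1),
    (XV p.1 - XV p.2)

def incl1 (ν ν' : I → ℕ) (x : VarType ν) : VarType (ν + ν') :=
  ⟨x.1, Fin.castAdd (ν' x.1) x.2⟩

def incl2 (ν ν' : I → ℕ) (y : VarType ν') : VarType (ν + ν') :=
  ⟨y.1, Fin.natAdd (ν y.1) y.2⟩

def embed1 (ν ν' : I → ℕ) (R : Laur F ν) : Laur F (ν + ν') :=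
  AddMonoidAlgebra.ofCoeff (Finsupp.mapDomain (fun m => Finsupp.mapDomain (incl1 ν ν') m) R.coeff)

def embed2 (ν ν' : I → ℕ) (R : Laur F ν') : Laur F (ν + ν') :=
  AddMonoidAlgebra.ofCoeff (Finsupp.mapDomain (fun m => Finsupp.mapDomain (incl2 ν ν') m) R.coeff)

/-- `Dsym · ∏_{x ∈ vars(ν), y ∈ vars(ν')} ζ_{color x, color y}(z_x / z_y)`, with all
denominators cancelled: the kernel of the shuffle product after clearing denominators. -/
def Kpoly (src tgt : E → I) (q : F) (t : E → F) (ν ν' : I → ℕ) : Laur F (ν + ν') :=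
  (∏ p ∈ (Finset.univ : Finset (VarType ν × VarType ν')),
    (compL (zetaT src tgt q t p.1.1 p.2.1) (ratio (incl1 ν ν' p.1) (incl2 ν ν' p.2))
      * (if p.1.1 = p.2.1 then
          (XV (incl1 ν ν' p.1) - XV (incl2 ν ν' p.2)) * XV (incl2 ν ν' p.2) else 1)))
  * (∏ p ∈ (Finset.univ : Finset (VarType ν × VarType ν)).filter
        (fun p => p.1 ≠ p.2 ∧ p.1.1 = p.2.1),
      (XV (incl1 ν ν' p.1) - XV (incl1 ν ν' p.2)))
  * (∏ p ∈ (Finset.univ : Finset (VarType ν' × VarType ν')).filter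
        (fun p => p.1 ≠ p.2 ∧ p.1.1 = p.2.1),
      (XV (incl2 ν ν' p.1) - XV (incl2 ν ν' p.2)))

/-- The defining identity of the shuffle product `R * R' = P`, with denominators cleared:
`∏_i ν_i! ν'_i! • (Dsym · P) = ∑_{color-preserving g} g ( R ⊗ R' · Kpoly )`. -/
def ShuffleEq (src tgt : E → I) (q : F) (t : E → F) {ν ν' : I → ℕ}
    (R : Laur F ν) (R' : Laur F ν') (P : Laur F (ν + ν')) : Prop :=
  ((∏ i : I, Nat.factorial (ν i) * Nat.factorial (ν' i) : ℕ) : F) • (Dsym F (ν + ν') * P) =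
    ∑ g : {g : Equiv.Perm (VarType (ν + ν')) // ColorPres g},
      rnm g.val (embed1 ν ν' R * embed2 ν ν' R' * Kpoly src tgt q t ν ν')

/-- `(V, ι)` is a model of the big shuffle algebra `𝒱`: an `F`-algebra whose product is
the shuffle product. -/
def IsShuffleAlgebra (src tgt : E → I) (q : F) (t : E → F) (V : Type) [Ring V] [Algebra F V]
    (ι : VV F I ≃ₗ[F] V) : Prop :=
  (ι (inclV 0 ⟨AddMonoidAlgebra.single 0 1, one_sym⟩) = 1) ∧
  ∀ (ν ν' : I → ℕ) (R : SymSub F ν) (R' : SymSub F ν') (P : SymSub F (ν + ν')),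
    ShuffleEq src tgt q t R.val R'.val P.val →
    ι (inclV ν R) * ι (inclV ν' R') = ι (inclV (ν + ν') P)

end QShuffle

namespace QShuffle

variable {I E : Type} [Fintype I] [Fintype E] [DecidableEq I] [DecidableEq E]
variable {F : Type} [Field F]

/-! ## The pairing, via expansion in a Hahn series field

The "expansion in the region `|z_1| ≫ ⋯ ≫ |z_n|`" of a rational function is encoded by
working inside the field of Hahn series over the lexicographic group `Lex (Fin n →₀ ℤ)`
(a Laurent monomial `∏ z_a^{v_a}` is placed in degree `toLex (-v)`, so that each ratio
`z_b/z_a` with `a < b` has positive order, and taking inverses in this field implements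
exactly the geometric series expansions in these ratios). -/

abbrev HF (F : Type) [Field F] (n : ℕ) : Type := HahnSeries (Lex (Fin n →₀ ℤ)) F

/-- the monomial `z_1^{v 1} ⋯ z_n^{v n}` in the Hahn field -/
def monoH {n : ℕ} (v : Fin n → ℤ) : HF F n :=
  HahnSeries.single (toLex (Finsupp.equivFunOnFinite.symm fun a => - v a)) (1 : F)

/-- a Laurent polynomial in the Hahn field -/
def embedH {n : ℕ} (S : AddMonoidAlgebra F (Fin n →₀ ℤ)) : HF F n :=
  Finsupp.sum S.coeff fun m a => HahnSeries.single (toLex (-m)) a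

/-- the Hahn degree of the ratio `z_b/z_a` -/
def rexp {n : ℕ} (a b : Fin n) : Fin n →₀ ℤ :=
  Finsupp.single a 1 - Finsupp.single b 1

/-- the expansion of `ζ_{c_b, c_a}(z_b/z_a)` in the Hahn field (for `a < b`) -/
def zetaH (src tgt : E → I) (q : F) (t : E → F) {n : ℕ} (c : Fin n → I) (a b : Fin n) :
    HF F n :=
  (Finsupp.sum (zetaT src tgt q t (c b) (c a)).coeff fun m x =>
      HahnSeries.single (toLex (m • rexp a b)) x)
    * ((1 - HahnSeries.single (toLex (rexp a b)) (1 : F))⁻¹) ^ dl (c b) (c a)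

/-- `⟨e_{c_1,d_1} ⋯ e_{c_n,d_n}, S⟩` for a Laurent polynomial `S` in the variables
`z_1, …, z_n`: the constant term of `z^d · S · ∏_{a<b} ζ_{c_b c_a}(z_b/z_a)⁻¹`,
expanded in the region `|z_1| ≫ ⋯ ≫ |z_n|`. -/
def pairCore (src tgt : E → I) (q : F) (t : E → F) {n : ℕ} (c : Fin n → I) (d : Fin n → ℤ)
    (S : AddMonoidAlgebra F (Fin n →₀ ℤ)) : F :=
  (embedH S * monoH d *
      ∏ p ∈ (Finset.univ : Finset (Fin n × Fin n)).filter (fun p : Fin n × Fin n => p.1 < p.2),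
        (zetaH src tgt q t c p.1 p.2)⁻¹).coeff 0

/-- substitution `z_a ↦ z_{β a}` at the level of exponents -/
def pullback {ν : I → ℕ} (n : ℕ) (β : Fin n ≃ VarType ν) (R : Laur F ν) :
    AddMonoidAlgebra F (Fin n →₀ ℤ) :=
  AddMonoidAlgebra.ofCoeff (Finsupp.mapDomain (fun m : VarType ν →₀ ℤ => Finsupp.equivMapDomain β.symm m) R.coeff)

/-- The pairing `⟨e_w , R⟩` of a word with a symmetric Laurent polynomial (`0` if the
degrees do not match; the choice of the color-compatible bijection `β` is immaterial
when `R` is symmetric). -/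
def pairWord (src tgt : E → I) (q : F) (t : E → F) (l : Word I) {ν : I → ℕ} (R : Laur F ν) :
    F :=
  if h : ∃ β : Fin l.length ≃ VarType ν, ∀ a, (β a).1 = (l.get a).1 then
    pairCore src tgt q t (fun a => (l.get a).1) (fun a => (l.get a).2)
      (pullback l.length h.choose R)
  else 0

/-- The pairing of an arbitrary element of the free algebra with `R`, extended linearly
from words. -/
def pairFree (src tgt : E → I) (q : F) (t : E → F) (x : FreeAlgebra F (I × ℤ)) {ν : I → ℕ}
    (R : Laur F ν) : F :=
  Finsupp.sum
    ((FreeAlgebra.equivMonoidAlgebraFreeMonoid : FreeAlgebra F (I × ℤ) ≃ₐ[F]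
        MonoidAlgebra F (FreeMonoid (I × ℤ))) x).coeff
    fun w cf => cf * pairWord src tgt q t (FreeMonoid.toList w) R

end QShuffle

namespace QShuffle

variable {I E : Type} [Fintype I] [Fintype E] [DecidableEq I] [DecidableEq E]
variable {F : Type} [Field F]

/-! ## The cubic elements `A^{(e)}_{a,b,c}`

We work with Laurent polynomials in the three variables `x₁ = z 0, x₂ = z 1, y = z 2`.
The rational prefactors appearing in `X^{(e)}` are Laurent polynomials after the
cancellations indicated in the paper; we define them in cancelled form. -/

abbrev L3 (F : Type) [Field F] : Type := AddMonoidAlgebra F (Fin 3 →₀ ℤ)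

/-- substitute the monomial with exponent vector `u` into a 1-variable Laurent polynomial -/
def comp3 (l : LaurentPolynomial F) (u : Fin 3 →₀ ℤ) : L3 F :=
  Finsupp.sum l.coeff fun m a => AddMonoidAlgebra.single (m • u) a

/-- exponent vector of `z_b / z_a` -/
def uru (a b : Fin 3) : Fin 3 →₀ ℤ := Finsupp.single b 1 - Finsupp.single a 1

open LaurentPolynomial in
/-- `ζ̃_{ij}(x)` without its `(1 - x q⁻¹)^{δ_{ij}}` factor, i.e.
`ζ̃_{ii}(x)/(1 - x q⁻¹)` when `i = j`. -/
def zetaNoQ (src tgt : E → I) (q : F) (t : E → F) (i j : I) : LaurentPolynomial F :=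
  (∏ e ∈ edges src tgt i j, (C (t e)⁻¹ - T 1))
    * ∏ e ∈ edges src tgt j i, (1 - C (t e * q⁻¹) * T (-1))

open LaurentPolynomial in
/-- For an edge `e : i → j` of `Ē`, the Laurent polynomial `ζ̃_{ji}(x) / (1 - x q / t_e)`
(the displayed factor cancels a linear factor of `ζ̃_{ji}`). -/
def cancelA (src tgt : E → I) (q : F) (t : E → F) : DEdge E → LaurentPolynomial F
  | Sum.inl f =>
      (if tgt f = src f then 1 - C q⁻¹ * T 1 else 1)
        * (∏ e' ∈ edges src tgt (tgt f) (src f), (C (t e')⁻¹ - T 1))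
        * (∏ e' ∈ (edges src tgt (src f) (tgt f)).erase f, (1 - C (t e' * q⁻¹) * T (-1)))
        * (C (- (t f) * q⁻¹) * T (-1))
  | Sum.inr f =>
      (if src f = tgt f then 1 - C q⁻¹ * T 1 else 1)
        * (∏ e' ∈ (edges src tgt (src f) (tgt f)).erase f, (C (t e')⁻¹ - T 1))
        * (∏ e' ∈ edges src tgt (tgt f) (src f), (1 - C (t e' * q⁻¹) * T (-1)))
        * C (t f)⁻¹

open LaurentPolynomial in
/-- For an edge `e : i → j` of `Ē`, the Laurent polynomial `ζ̃_{ij}(x) / (1 - x t_e)`. -/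
def cancelB (src tgt : E → I) (q : F) (t : E → F) : DEdge E → LaurentPolynomial F
  | Sum.inl f =>
      (if src f = tgt f then 1 - C q⁻¹ * T 1 else 1)
        * (∏ e' ∈ (edges src tgt (src f) (tgt f)).erase f, (C (t e')⁻¹ - T 1))
        * (∏ e' ∈ edges src tgt (tgt f) (src f), (1 - C (t e' * q⁻¹) * T (-1)))
        * C (t f)⁻¹
  | Sum.inr f =>
      (if tgt f = src f then 1 - C q⁻¹ * T 1 else 1)
        * (∏ e' ∈ edges src tgt (tgt f) (src f), (C (t e')⁻¹ - T 1))
        * (∏ e' ∈ (edges src tgt (src f) (tgt f)).erase f, (1 - C (t e' * q⁻¹) * T (-1)))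
        * (C (- (t f) * q⁻¹) * T (-1))

/-- a Laurent monomial in `x₁, x₂, y` -/
def mono3 (a b c : ℤ) (cf : F) : L3 F :=
  AddMonoidAlgebra.single (Finsupp.equivFunOnFinite.symm ![a, b, c]) cf

variable (src tgt : E → I) (q : F) (t : E → F) in
/-- the Laurent-polynomial prefactor of `e_i(x₁)e_i(x₂)e_j(y)` in `X^{(e)}` -/
def pref1 (e : DEdge E) : L3 F :=
  comp3 (zetaNoQ src tgt q t (dsrc src tgt e) (dsrc src tgt e)) (uru 0 1)
    * comp3 (zetaT src tgt q t (dtgt src tgt e) (dsrc src tgt e)) (uru 0 2)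
    * comp3 (cancelA src tgt q t e) (uru 1 2)

variable (src tgt : E → I) (q : F) (t : E → F) in
/-- the Laurent-polynomial prefactor of `e_i(x₂)e_j(y)e_i(x₁)` in `X^{(e)}` -/
def pref2 (e : DEdge E) : L3 F :=
  comp3 (zetaT src tgt q t (dsrc src tgt e) (dsrc src tgt e)) (uru 1 0)
    * comp3 (cancelA src tgt q t e) (uru 1 2)
    * comp3 (cancelB src tgt q t e) (uru 2 0)
    * mono3 0 1 (-1) (- dt q t e)
    * (mono3 (-1) 0 1 (-1 : F)) ^ dl (dsrc src tgt e) (dtgt src tgt e)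

variable (src tgt : E → I) (q : F) (t : E → F) in
/-- the Laurent-polynomial prefactor of `e_j(y)e_i(x₁)e_i(x₂)` in `X^{(e)}` -/
def pref3 (e : DEdge E) : L3 F :=
  comp3 (zetaNoQ src tgt q t (dsrc src tgt e) (dsrc src tgt e)) (uru 0 1)
    * comp3 (cancelB src tgt q t e) (uru 2 0)
    * comp3 (zetaT src tgt q t (dsrc src tgt e) (dtgt src tgt e)) (uru 2 1)
    * mono3 0 1 (-1) (dt q t e * q⁻¹)
    * (mono3 (-1) (-1) 2 (1 : F)) ^ dl (dsrc src tgt e) (dtgt src tgt e)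

variable (q : F) (t : E → F) in
/-- the monomial shift `x₁^a (x₂/q)^b (y/t_e)^c` -/
def shift3 (e : DEdge E) (a b c : ℤ) : L3 F :=
  mono3 a b c (q ^ (-b) * (dt q t e) ^ (-c))

variable (src tgt : E → I) (q : F) (t : E → F) in
/-- The cubic element `A^{(e)}_{a,b,c}`, as an element of the free algebra: the constant
term of `x₁^a (x₂/q)^b (y/t_e)^c / ((1-q)(1-t_e)^{δ_{ij}}(1-t_e/q)^{δ_{ij}}) ⬝ X^{(e)}`. -/
def Afree (e : DEdge E) (a b c : ℤ) : FreeAlgebra F (I × ℤ) :=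
  ((1 - q)⁻¹ * ((1 - dt q t e) ^ dl (dsrc src tgt e) (dtgt src tgt e))⁻¹
      * ((1 - dt q t e * q⁻¹) ^ dl (dsrc src tgt e) (dtgt src tgt e))⁻¹) •
  (Finsupp.sum (shift3 q t e a b c * pref1 src tgt q t e).coeff (fun m cf =>
      cf • (gen F I (dsrc src tgt e) (m 0) * gen F I (dsrc src tgt e) (m 1)
        * gen F I (dtgt src tgt e) (m 2)))
    + Finsupp.sum (shift3 q t e a b c * pref2 src tgt q t e).coeff (fun m cf =>
      cf • (gen F I (dsrc src tgt e) (m 1) * gen F I (dtgt src tgt e) (m 2)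
        * gen F I (dsrc src tgt e) (m 0)))
    + Finsupp.sum (shift3 q t e a b c * pref3 src tgt q t e).coeff (fun m cf =>
      cf • (gen F I (dtgt src tgt e) (m 2) * gen F I (dsrc src tgt e) (m 0)
        * gen F I (dsrc src tgt e) (m 1))))

/-- The relations defining the quantum loop group `U⁺ = Ũ⁺/J`: the quadratic relations
together with the vanishing of all the cubic elements. -/
inductive FullRel (src tgt : E → I) (q : F) (t : E → F) :
    FreeAlgebra F (I × ℤ) → FreeAlgebra F (I × ℤ) → Prop
  | quad {x y : FreeAlgebra F (I × ℤ)} : QuadRel src tgt q t x y → FullRel src tgt q t x y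
  | cubic (e : DEdge E) (a b c : ℤ) : FullRel src tgt q t (Afree src tgt q t e a b c) 0

/-- The quantum loop group `U⁺ = Ũ⁺ / J`. -/
abbrev Uplus (src tgt : E → I) (q : F) (t : E → F) : Type :=
  RingQuot (FullRel src tgt q t)

/-- `e_{i,d} ∈ U⁺` -/
def eUp (src tgt : E → I) (q : F) (t : E → F) (i : I) (d : ℤ) : Uplus src tgt q t :=
  RingQuot.mkAlgHom F (FullRel src tgt q t) (gen F I i d)

/-- the canonical projection `Ũ⁺ → U⁺` -/
def projU (src tgt : E → I) (q : F) (t : E → F) :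
    Utilde src tgt q t →ₐ[F] Uplus src tgt q t :=
  RingQuot.liftAlgHom F ⟨RingQuot.mkAlgHom F (FullRel src tgt q t),
    fun _ _ hxy => RingQuot.mkAlgHom_rel F (FullRel.quad hxy)⟩

/-- `J ⊆ Ũ⁺`: the two-sided ideal generated by the cubic elements, realized as the kernel
of the projection `Ũ⁺ → U⁺ = Ũ⁺/J`. -/
def Jset (src tgt : E → I) (q : F) (t : E → F) : Set (Utilde src tgt q t) :=
  {u | projU src tgt q t u = 0}

/-! ## Leading words -/

def totalDeg {I : Type} [Fintype I] (ν : I → ℕ) : ℕ := ∑ i, ν i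

/-- The word associated to the monomial `∏ z_v^{m v}` and the ordering `σ` of its
variables: the `a`-th letter is `(σ a).1` with exponent
`d_a = k_a + ∑_{t>a} #_{i_a → i_t} - ∑_{s<a} #_{i_s → i_a}` where `k_a = -m (σ a)`. -/
def assocWord (src tgt : E → I) {ν : I → ℕ} (m : VarType ν →₀ ℤ)
    (σ : Fin (totalDeg ν) ≃ VarType ν) : Word I :=
  List.ofFn fun a : Fin (totalDeg ν) =>
    ((σ a).1,
      - m (σ a)
        + ∑ t' ∈ Finset.univ.filter (fun t' : Fin (totalDeg ν) => a < t'),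
            (nE src tgt (σ a).1 (σ t').1 : ℤ)
        - ∑ s ∈ Finset.univ.filter (fun s : Fin (totalDeg ν) => s < a),
            (nE src tgt (σ s).1 (σ a).1 : ℤ))

/-- `w` is the leading word of the monomial `m`: the lexicographically largest among the
words associated to the orderings of its variables. -/
def IsLeadOfMono (src tgt : E → I) [LinearOrder I] {ν : I → ℕ} (m : VarType ν →₀ ℤ)
    (w : Word I) : Prop :=
  (∃ σ, w = assocWord src tgt m σ) ∧ ∀ σ, wordLE (assocWord src tgt m σ) w

/-- `w` is the leading word of `0 ≠ R ∈ 𝒱`: the largest of the leading words of the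
monomials appearing in `R`. -/
def IsLead (src tgt : E → I) [LinearOrder I] {ν : I → ℕ} (R : Laur F ν) (w : Word I) : Prop :=
  (∃ m ∈ R.coeff.support, IsLeadOfMono src tgt m w) ∧
    ∀ m ∈ R.coeff.support, ∀ σ, wordLE (assocWord src tgt m σ) w

end QShuffle

/-!
A word `w ≤ r :: v` starts with a letter of exponent at least `r.2`. Non-increasingness bounds
every later exponent `d_b` of `w` below by the first one minus `∑_{s<b} #_{i_s i_b}`, hence by
`r.2 - N · 2|E|` with `N = ∑ᵢ nᵢ` the length of `w`; the fixed exponent sum `d` then bounds all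
exponents above. So these words have length `N` and letters in a finite set.
-/

theorem List.finite_length_eq_of_forall_mem {α : Type*} {s : Set α} (hs : s.Finite) (n : ℕ) :
    {l : List α | l.length = n ∧ ∀ x ∈ l, x ∈ s}.Finite := by
  have := hs.to_subtype
  refine ((List.finite_length_eq s n).image (List.map Subtype.val)).subset ?_
  rintro l ⟨rfl, hl⟩
  lift l to List s using hl
  exact ⟨l, (List.length_map _).symm, rfl⟩

theorem List.add_nsmul_le_sum_of_mem {M : Type*} [AddCommMonoid M] [Preorder M]
    [IsOrderedAddMonoid M] [DecidableEq M] {l : List M} {a b : M} (ha : a ∈ l)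
    (hb : ∀ x ∈ l, b ≤ x) : a + (l.length - 1) • b ≤ l.sum := by
  rw [← List.sum_erase ha, ← List.length_erase_of_mem ha]
  exact add_le_add_right
    ((l.erase a).card_nsmul_le_sum b fun x hx => hb x (List.mem_of_mem_erase hx)) a

namespace QShuffle

variable {I E : Type}

theorem length_eq_sum_colorCount [Fintype I] [DecidableEq I] (w : Word I) :
    w.length = ∑ i, colorCount w i := by
  simpa [colorCount] using (Multiset.sum_count_eq_card (s := Finset.univ)
    (m := (↑(w.map Prod.fst) : Multiset I)) fun a _ => Finset.mem_univ a).symm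

theorem eq_nil_of_wordLE_nil [LT I] {w : Word I} (hw : wordLE w []) : w = [] := by
  rcases hw with hw | rfl
  · cases hw
  · rfl

theorem snd_le_of_wordLE_cons [LT I] {p r : I × ℤ} {w v : Word I}
    (hw : wordLE (p :: w) (r :: v)) : r.2 ≤ p.2 := by
  rcases hw with hw | hw
  · cases hw with
    | cons => rfl
    | rel h => rcases h with h | ⟨h, -⟩ <;> [exact h.le; exact h.ge]
  · rw [(List.cons_eq_cons.mp hw).1]

theorem nnE_le_two_mul_card [Fintype E] [DecidableEq I] (src tgt : E → I) (i j : I) :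
    nnE src tgt i j ≤ 2 * Fintype.card E := by
  have hle (i j : I) : nE src tgt i j ≤ Fintype.card E := Finset.card_le_univ _
  rw [nnE, two_mul]
  exact add_le_add (hle i j) (hle j i)

theorem NonInc.get_snd_le [Fintype E] [DecidableEq I] [LinearOrder I] {src tgt : E → I}
    {w : Word I} (hw : NonInc src tgt w) {a b : Fin w.length} (hab : a ≤ b) :
    (w.get a).2 ≤ (w.get b).2 + (b - a : ℕ) * (2 * Fintype.card E) := by
  rcases hab.lt_or_eq with hab | rfl
  · have hsum : ∑ s ∈ Finset.Ico a b, (nnE src tgt (w.get s).1 (w.get b).1 : ℤ)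
        ≤ (b - a : ℕ) * (2 * Fintype.card E) := by
      simpa [Fin.card_Ico] using Finset.sum_le_card_nsmul (Finset.Ico a b) _ _ fun s _ =>
        (by exact_mod_cast nnE_le_two_mul_card src tgt _ _ :
          (nnE src tgt (w.get s).1 (w.get b).1 : ℤ) ≤ 2 * Fintype.card E)
    rcases hw a b hab with h | ⟨h, -⟩ <;> linarith
  · simp

theorem NonInc.head_snd_le [Fintype E] [DecidableEq I] [LinearOrder I] {src tgt : E → I}
    {p x : I × ℤ} {w : Word I} (hw : NonInc src tgt (p :: w)) (hx : x ∈ p :: w) :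
    p.2 ≤ x.2 + w.length * (2 * Fintype.card E) := by
  obtain ⟨b, rfl⟩ := List.mem_iff_get.mp hx
  have hb : (b : ℕ) - 0 ≤ w.length := by
    have : (b : ℕ) < w.length + 1 := b.isLt
    omega
  calc p.2 = ((p :: w).get ⟨0, by simp⟩).2 := rfl
    _ ≤ _ := hw.get_snd_le (Fin.zero_le b)
    _ ≤ _ := by gcongr

theorem statement2_general {I E : Type} [Fintype I] [Fintype E] [LinearOrder I]
    (src tgt : E → I) (n : I → ℕ) (d : ℤ) (v : Word I) :
    {w : Word I | NonInc src tgt w ∧ (fun i => colorCount w i) = n ∧ expSum w = d ∧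
      wordLE w v}.Finite := by
  obtain _ | ⟨r, v⟩ := v
  · refine (Set.finite_singleton []).subset ?_
    rintro w ⟨-, -, -, hw⟩
    exact eq_nil_of_wordLE_nil hw
  set N := ∑ i, n i
  set lo : ℤ := r.2 - N * (2 * Fintype.card E)
  refine (List.finite_length_eq_of_forall_mem
    (Set.finite_univ.prod (Set.finite_Icc lo (d - (N - 1 : ℕ) * lo))) N).subset ?_
  rintro w ⟨hni, hn, rfl, hle⟩
  have hlen : w.length = N := by rw [length_eq_sum_colorCount, hn]
  have hlo : ∀ x ∈ w, lo ≤ x.2 := by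
    obtain _ | ⟨p, u⟩ := w
    · simp
    intro x hx
    have hu : (u.length : ℤ) ≤ N := by simp [← hlen]
    have hrp := snd_le_of_wordLE_cons hle
    have hpx := hni.head_snd_le hx
    have hK : (u.length : ℤ) * (2 * Fintype.card E) ≤ N * (2 * Fintype.card E) := by gcongr
    linarith
  have hhi : ∀ x ∈ w, x.2 + (N - 1 : ℕ) * lo ≤ expSum w := fun x hx => by
    simpa [expSum, hlen] using
      List.add_nsmul_le_sum_of_mem (List.mem_map_of_mem hx) (List.forall_mem_map.mpr hlo)
  exact ⟨hlen, fun x hx => ⟨Set.mem_univ _, hlo x hx, by linarith [hhi x hx]⟩⟩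

/-- For any fixed degree `(n, d)` and any word `v`, there are only finitely
many non-increasing words of degree `(n, d)` bounded above by `v` in the lexicographic
order on words. -/
theorem statement2 {I E : Type} [Fintype I] [Fintype E] [LinearOrder I] [DecidableEq E]
    (src tgt : E → I) (n : I → ℕ) (d : ℤ) (v : Word I) :
    {w : Word I | NonInc src tgt w ∧ (fun i => colorCount w i) = n ∧ expSum w = d ∧
      wordLE w v}.Finite :=
  statement2_general src tgt n d v

end QShuffle
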